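/- arXiv:math/0703047 — 2 statements merged into one kernel-verified Lean document; each statement's English description precedes it below -/
import Mathlib

section
/- Fix integers r ≥ 1 and l ≥ 1. If every coloring in an ideal X of edge [l]-colored complete graphs is r-simple, then there exists a constant d and n_0 such that |X_n| = d for all n > n_0. -/
/-- A (directed representation of an) edge: a pair of vertices `p` with `p.1 < p.2`. -/
abbrev Edge (n : ℕ) := {p : Fin n × Fin n // p.1 < p.2}

/-- An edge-`C`-colored complete graph: a number of vertices together with a coloring
of all edges by elements of `C`. -/
abbrev Coloring (C : Type) := (n : ℕ) × (Edge n → C)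

/-- Build an edge from natural numbers `i < j < n`. -/
def mkE {n : ℕ} (i j : ℕ) (hij : i < j) (hj : j < n) : Edge n :=
  ⟨(⟨i, lt_trans hij hj⟩, ⟨j, hj⟩), Fin.mk_lt_mk.mpr hij⟩

/-- The image of an edge under a strictly increasing vertex map. -/
def edgeMap {a b : ℕ} (f : Fin a → Fin b) (hf : StrictMono f) (e : Edge a) : Edge b :=
  ⟨(f e.1.1, f e.1.2), hf e.2⟩

/-- Containment of colorings: `K ⪯ L` via a strictly increasing vertex map that sends
the color of each edge to a `le`-larger color. -/
def ColLe {C : Type} (le : C → C → Prop) (K L : Coloring C) : Prop :=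
  ∃ f : Fin K.1 → Fin L.1, ∃ hf : StrictMono f,
    ∀ e : Edge K.1, le (K.2 e) (L.2 (edgeMap f hf e))

/-- A lower ideal of colorings. -/
def IsIdeal {C : Type} (le : C → C → Prop) (X : Set (Coloring C)) : Prop :=
  ∀ K L : Coloring C, ColLe le K L → L ∈ X → K ∈ X

/-- A coloring `K = (n,χ)` is `r`-simple: the (0-indexed) interval `[r, n-r-1]`
(i.e. `[r+1, n-r]` 1-indexed) is monochromatic, and for every vertex `v` among the first
`r` or last `r` vertices, all edges from `v` to the middle interval `[2r, n-2r-1]`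
(1-indexed `[2r+1, n-2r]`) have the same color. -/
def SimpleC {l : ℕ} (r : ℕ) (K : Coloring (Fin l)) : Prop :=
  (∀ (i j i' j' : ℕ) (hij : i < j) (hij' : i' < j'),
      r ≤ i → j + 1 ≤ K.1 - r → r ≤ i' → j' + 1 ≤ K.1 - r →
      ∀ (hj : j < K.1) (hj' : j' < K.1),
        K.2 (mkE i j hij hj) = K.2 (mkE i' j' hij' hj')) ∧
  (∀ (v w w' : ℕ) (hv : v < r)
      (hw1 : 2 * r ≤ w) (hw2 : w + 1 ≤ K.1 - 2 * r)
      (hw1' : 2 * r ≤ w') (hw2' : w' + 1 ≤ K.1 - 2 * r)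
      (hw : w < K.1) (hw' : w' < K.1),
        K.2 (mkE v w (by omega) hw) = K.2 (mkE v w' (by omega) hw')) ∧
  (∀ (v w w' : ℕ) (hv1 : K.1 - r ≤ v) (hv : v < K.1)
      (hw1 : 2 * r ≤ w) (hw2 : w + 1 ≤ K.1 - 2 * r)
      (hw1' : 2 * r ≤ w') (hw2' : w' + 1 ≤ K.1 - 2 * r),
        K.2 (mkE w v (by omega) hv) = K.2 (mkE w' v (by omega) hv))

/-! ### Auxiliary machinery -/

/-- The strictly increasing map `Fin n → Fin (n+1)` skipping value `t`. -/
def skipF {n : ℕ} (t : ℕ) : Fin n → Fin (n+1) := fun k =>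
  if k.val < t then ⟨k.val, by omega⟩ else ⟨k.val+1, by omega⟩

lemma skipF_mono {n t : ℕ} : StrictMono (skipF (n := n) t) := by
  intro a b hab
  have h : (a:ℕ) < b := hab
  unfold skipF
  split_ifs <;> exact Fin.mk_lt_mk.mpr (by omega)

/-- Delete vertex `t` from a coloring on `n+1` vertices. -/
def delC {C : Type} {n : ℕ} (t : ℕ) (χ : Edge (n+1) → C) : Edge n → C :=
  fun e => χ (edgeMap (skipF t) skipF_mono e)

lemma delC_eq {C : Type} {n t : ℕ} {χ1 χ2 : Edge (n+1) → C}
    (h : delC t χ1 = delC t χ2) (ht : t ≤ n)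
    (i j : ℕ) (hij : i < j) (hj : j < n + 1) (hi2 : i ≠ t) (hj2 : j ≠ t) :
    χ1 (mkE i j hij hj) = χ2 (mkE i j hij hj) := by
  have hij' : (if i < t then i else i - 1) < (if j < t then j else j - 1) := by
    split_ifs <;> omega
  have hj'n : (if j < t then j else j - 1) < n := by split_ifs <;> omega
  have key := congrFun h (mkE _ _ hij' hj'n)
  simp only [delC] at key
  have heq : edgeMap (skipF t) skipF_mono (mkE _ _ hij' hj'n) = mkE i j hij hj := by
    apply Subtype.ext
    simp only [edgeMap, mkE, skipF, Prod.ext_iff, Fin.ext_iff]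
    constructor <;> split_ifs <;> simp <;> omega
  rw [heq] at key
  exact key

/-- KEY STEP: two distinct `r`-simple colorings on at least `4r+2` vertices
already differ after deleting the vertex `2r`. -/
lemma simple_inj {l n r : ℕ} (hr : 1 ≤ r) (hn : 4*r + 2 ≤ n + 1)
    {χ1 χ2 : Edge (n+1) → Fin l}
    (h1 : SimpleC r ⟨n+1, χ1⟩) (h2 : SimpleC r ⟨n+1, χ2⟩)
    (h : delC (2*r) χ1 = delC (2*r) χ2) : χ1 = χ2 := by
  have ht : 2*r ≤ n := by omega
  suffices H : ∀ (i j : ℕ) (hij : i < j) (hj : j < n+1),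
      χ1 (mkE i j hij hj) = χ2 (mkE i j hij hj) by
    funext e
    obtain ⟨⟨a, b⟩, hab⟩ := e
    exact H a b hab b.isLt
  intro i j hij hj
  by_cases hi2 : i = 2*r
  · subst hi2
    by_cases hjs : j + 1 ≤ (n+1) - r
    · have c1 : χ1 (mkE (2*r) j hij hj) =
          χ1 (mkE (2*r+1) (2*r+2) (by omega) (show 2*r+2 < n+1 by omega)) :=
        h1.1 (2*r) j (2*r+1) (2*r+2) hij (by omega)
          (show r ≤ 2*r by omega) (show j+1 ≤ (n+1)-r from hjs)
          (show r ≤ 2*r+1 by omega) (show 2*r+2+1 ≤ (n+1)-r by omega) hj _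
      have c2 : χ1 (mkE (2*r+1) (2*r+2) (by omega) (show 2*r+2 < n+1 by omega)) =
          χ2 (mkE (2*r+1) (2*r+2) (by omega) (show 2*r+2 < n+1 by omega)) :=
        delC_eq h ht _ _ _ _ (by omega) (by omega)
      have c3 : χ2 (mkE (2*r+1) (2*r+2) (by omega) (show 2*r+2 < n+1 by omega)) =
          χ2 (mkE (2*r) j hij hj) :=
        h2.1 (2*r+1) (2*r+2) (2*r) j (by omega) hij
          (show r ≤ 2*r+1 by omega) (show 2*r+2+1 ≤ (n+1)-r by omega)
          (show r ≤ 2*r by omega) (show j+1 ≤ (n+1)-r from hjs) _ hj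
      exact c1.trans (c2.trans c3)
    · have hjbig : (n+1) - r ≤ j := by omega
      have c1 : χ1 (mkE (2*r) j hij hj) = χ1 (mkE (2*r+1) j (by omega) hj) :=
        h1.2.2 j (2*r) (2*r+1) (show (n+1)-r ≤ j from hjbig) hj
          (le_refl _) (show 2*r+1 ≤ (n+1)-2*r by omega)
          (show 2*r ≤ 2*r+1 by omega) (show 2*r+1+1 ≤ (n+1)-2*r by omega)
      have c2 : χ1 (mkE (2*r+1) j (by omega) hj) = χ2 (mkE (2*r+1) j (by omega) hj) :=
        delC_eq h ht _ _ _ _ (by omega) (by omega)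
      have c3 : χ2 (mkE (2*r+1) j (by omega) hj) = χ2 (mkE (2*r) j hij hj) :=
        (h2.2.2 j (2*r) (2*r+1) (show (n+1)-r ≤ j from hjbig) hj
          (le_refl _) (show 2*r+1 ≤ (n+1)-2*r by omega)
          (show 2*r ≤ 2*r+1 by omega) (show 2*r+1+1 ≤ (n+1)-2*r by omega)).symm
      exact c1.trans (c2.trans c3)
  · by_cases hj2 : j = 2*r
    · subst hj2
      by_cases his : r ≤ i
      · have c1 : χ1 (mkE i (2*r) hij hj) =
            χ1 (mkE (2*r+1) (2*r+2) (by omega) (show 2*r+2 < n+1 by omega)) :=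
          h1.1 i (2*r) (2*r+1) (2*r+2) hij (by omega)
            his (show 2*r+1 ≤ (n+1)-r by omega)
            (show r ≤ 2*r+1 by omega) (show 2*r+2+1 ≤ (n+1)-r by omega) hj _
        have c2 : χ1 (mkE (2*r+1) (2*r+2) (by omega) (show 2*r+2 < n+1 by omega)) =
            χ2 (mkE (2*r+1) (2*r+2) (by omega) (show 2*r+2 < n+1 by omega)) :=
          delC_eq h ht _ _ _ _ (by omega) (by omega)
        have c3 : χ2 (mkE (2*r+1) (2*r+2) (by omega) (show 2*r+2 < n+1 by omega)) =
            χ2 (mkE i (2*r) hij hj) :=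
          h2.1 (2*r+1) (2*r+2) i (2*r) (by omega) hij
            (show r ≤ 2*r+1 by omega) (show 2*r+2+1 ≤ (n+1)-r by omega)
            his (show 2*r+1 ≤ (n+1)-r by omega) _ hj
        exact c1.trans (c2.trans c3)
      · have hir : i < r := by omega
        have c1 : χ1 (mkE i (2*r) hij hj) =
            χ1 (mkE i (2*r+1) (by omega) (show 2*r+1 < n+1 by omega)) :=
          h1.2.1 i (2*r) (2*r+1) hir (le_refl _) (show 2*r+1 ≤ (n+1)-2*r by omega)
            (show 2*r ≤ 2*r+1 by omega) (show 2*r+1+1 ≤ (n+1)-2*r by omega) hj _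
        have c2 : χ1 (mkE i (2*r+1) (by omega) (show 2*r+1 < n+1 by omega)) =
            χ2 (mkE i (2*r+1) (by omega) (show 2*r+1 < n+1 by omega)) :=
          delC_eq h ht _ _ _ _ (by omega) (by omega)
        have c3 : χ2 (mkE i (2*r+1) (by omega) (show 2*r+1 < n+1 by omega)) =
            χ2 (mkE i (2*r) hij hj) :=
          (h2.2.1 i (2*r) (2*r+1) hir (le_refl _) (show 2*r+1 ≤ (n+1)-2*r by omega)
            (show 2*r ≤ 2*r+1 by omega) (show 2*r+1+1 ≤ (n+1)-2*r by omega) hj _).symm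
        exact c1.trans (c2.trans c3)
    · exact delC_eq h ht i j hij hj hi2 hj2

/-- Extract the coloring function of `K` as a function on `Edge n`, given `K.1 = n`. -/
def toFun' {C : Type} (n : ℕ) (K : Coloring C) (h : K.1 = n) : Edge n → C :=
  fun e => K.2 (cast (congrArg Edge h.symm) e)

lemma sigma_eq {C : Type} (n : ℕ) (K : Coloring C) (h : K.1 = n) :
    (⟨n, toFun' n K h⟩ : Coloring C) = K := by
  obtain ⟨m, χ⟩ := K
  cases h
  rfl

def fiberEquiv (C : Type) (n : ℕ) : {K : Coloring C // K.1 = n} ≃ (Edge n → C) where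
  toFun K := toFun' n K.1 K.2
  invFun χ := ⟨⟨n, χ⟩, rfl⟩
  left_inv := by rintro ⟨⟨m, χ⟩, rfl⟩; rfl
  right_inv χ := rfl

lemma finite_fiber {C : Type} [Finite C] (X : Set (Coloring C)) (n : ℕ) :
    Finite {K : Coloring C // K ∈ X ∧ K.1 = n} := by
  have h1 : Finite {K : Coloring C // K.1 = n} := Finite.of_equiv _ (fiberEquiv C n).symm
  exact Finite.of_injective
    (fun K => (⟨K.1, K.2.2⟩ : {K : Coloring C // K.1 = n}))
    (by
      intro K K' h
      apply Subtype.ext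
      simpa using congrArg Subtype.val h)

lemma mem_del {l : ℕ} {X : Set (Coloring (Fin l))} (hX : IsIdeal (· = ·) X)
    {n : ℕ} (t : ℕ) (χ : Edge (n+1) → Fin l)
    (hm : (⟨n+1, χ⟩ : Coloring (Fin l)) ∈ X) :
    (⟨n, delC t χ⟩ : Coloring (Fin l)) ∈ X :=
  hX _ _ ⟨skipF t, skipF_mono, fun _ => rfl⟩ hm

/-- If every coloring in an ideal `X` of edge `[l]`-colored complete graphs
is `r`-simple, then `|X_n|` is eventually constant. -/
theorem stmt_11 (l r : ℕ) (hl : 1 ≤ l) (hr : 1 ≤ r)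
    (X : Set (Coloring (Fin l))) (hX : IsIdeal (· = ·) X)
    (hs : ∀ K ∈ X, SimpleC r K) :
    ∃ d n₀ : ℕ, ∀ n : ℕ, n₀ < n →
      Nat.card {K : Coloring (Fin l) // K ∈ X ∧ K.1 = n} = d := by
  classical
  set f : ℕ → ℕ := fun n => Nat.card {K : Coloring (Fin l) // K ∈ X ∧ K.1 = n} with hf
  -- the restriction map is injective for large n, hence f is eventually nonincreasing
  have hstep : ∀ n, 4*r+1 ≤ n → f (n+1) ≤ f n := by
    intro n hn
    have : Finite {K : Coloring (Fin l) // K ∈ X ∧ K.1 = n} := finite_fiber X n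
    have memΦ : ∀ K : {K : Coloring (Fin l) // K ∈ X ∧ K.1 = n+1},
        (⟨n, delC (2*r) (toFun' (n+1) K.1 K.2.2)⟩ : Coloring (Fin l)) ∈ X := by
      intro K
      apply mem_del hX
      rw [sigma_eq]
      exact K.2.1
    set Φ : {K : Coloring (Fin l) // K ∈ X ∧ K.1 = n+1} →
        {K : Coloring (Fin l) // K ∈ X ∧ K.1 = n} := fun K =>
      ⟨⟨n, delC (2*r) (toFun' (n+1) K.1 K.2.2)⟩, memΦ K, rfl⟩ with hΦ
    apply Nat.card_le_card_of_injective Φ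
    intro K K' hKK'
    have hval : (⟨n, delC (2*r) (toFun' (n+1) K.1 K.2.2)⟩ : Coloring (Fin l)) =
        ⟨n, delC (2*r) (toFun' (n+1) K'.1 K'.2.2)⟩ := congrArg Subtype.val hKK'
    have h2nd : delC (2*r) (toFun' (n+1) K.1 K.2.2) =
        delC (2*r) (toFun' (n+1) K'.1 K'.2.2) :=
      eq_of_heq (Sigma.mk.inj_iff.mp hval).2
    have s1 : SimpleC r ⟨n+1, toFun' (n+1) K.1 K.2.2⟩ := by
      rw [sigma_eq]; exact hs K.1 K.2.1
    have s2 : SimpleC r ⟨n+1, toFun' (n+1) K'.1 K'.2.2⟩ := by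
      rw [sigma_eq]; exact hs K'.1 K'.2.1
    have hfun : toFun' (n+1) K.1 K.2.2 = toFun' (n+1) K'.1 K'.2.2 :=
      simple_inj hr (by omega) s1 s2 h2nd
    apply Subtype.ext
    calc K.1 = ⟨n+1, toFun' (n+1) K.1 K.2.2⟩ := (sigma_eq _ _ _).symm
      _ = ⟨n+1, toFun' (n+1) K'.1 K'.2.2⟩ := by rw [hfun]
      _ = K'.1 := sigma_eq _ _ _
  have hanti : ∀ a b, 4*r+1 ≤ a → a ≤ b → f b ≤ f a := by
    intro a b ha hab
    induction b with
    | zero => have : a = 0 := by omega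
              subst this; exact le_rfl
    | succ b ih =>
        rcases Nat.lt_or_ge a (b+1) with h | h
        · exact (hstep b (by omega)).trans (ih (by omega))
        · have : a = b + 1 := by omega
          subst this; exact le_rfl
  -- a nonincreasing sequence of naturals is eventually constant
  obtain ⟨k0, hk0⟩ := Nat.sInf_mem (Set.range_nonempty (fun k => f (4*r+1+k)))
  refine ⟨f (4*r+1+k0), 4*r+1+k0, ?_⟩
  intro n hn
  apply le_antisymm
  · exact hanti _ _ (by omega) (by omega)
  · have hmem : f n ∈ Set.range (fun k => f (4*r+1+k)) :=
      ⟨n - (4*r+1), by simp only []; congr 1; omega⟩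
    calc f (4*r+1+k0) = sInf (Set.range (fun k => f (4*r+1+k))) := hk0
      _ ≤ f n := Nat.sInf_le hmem
end

section
/- Let r ≥ 2 and let (n,χ) be an l-colored complete graph. Let A ⊆ [n] be a χ-homogeneous set of maximum cardinality and let A' be obtained from A by deleting its first 2r-2 and last 2r-2 elements. If A' is nonempty and not an interval of consecutive integers in [n], then (n,χ) contains an r-rich coloring. -/
/-- The reversal of an edge under the order-reversing permutation of the vertices. -/
def revE {n : ℕ} (e : Edge n) : Edge n :=
  ⟨(e.1.2.rev, e.1.1.rev), Fin.rev_lt_rev.mpr e.2⟩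

/-- The reversal of a coloring. -/
def revC {n : ℕ} {C : Type} (χ : Edge n → C) : Edge n → C := fun e => χ (revE e)

/-- A coloring on `2r-1` vertices is of type 1 (0-indexed version of:
`χ({i,i+1}) = a` for `1 ≤ i ≤ r-1` and `χ({r,r+1}) = b` for two distinct colors). -/
def Type1 {C : Type} (r : ℕ) (χ : Edge (2 * r - 1) → C) : Prop :=
  ∃ a b : C, a ≠ b ∧
    (∀ (t : ℕ) (h : t + 2 ≤ r), χ (mkE t (t + 1) (by omega) (by omega)) = a) ∧
    (∀ h : r < 2 * r - 1, χ (mkE (r - 1) r (by omega) h) = b)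

/-- A coloring on `2r-1` vertices is of type 2 (0-indexed version of:
`χ({1,i}) = a` for `2 ≤ i ≤ r` and `χ({1,r+1}) = b` for two distinct colors). -/
def Type2 {C : Type} (r : ℕ) (χ : Edge (2 * r - 1) → C) : Prop :=
  ∃ a b : C, a ≠ b ∧
    (∀ (t : ℕ) (h1 : 1 ≤ t) (h2 : t ≤ r - 1), χ (mkE 0 t (by omega) (by omega)) = a) ∧
    (∀ h : r < 2 * r - 1, χ (mkE 0 r (by omega) h) = b)

/-- An `r`-rich coloring: on `2r-1` vertices, of type 1 or type 2, in it or its reversal. -/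
def Rich {C : Type} (r : ℕ) (χ : Edge (2 * r - 1) → C) : Prop :=
  Type1 r χ ∨ Type1 r (revC χ) ∨ Type2 r χ ∨ Type2 r (revC χ)

/-- `(n,χ)` contains an `r`-rich coloring (with respect to discrete containment). -/
def ContainsRich {C : Type} {n : ℕ} (r : ℕ) (χ : Edge n → C) : Prop :=
  ∃ χ' : Edge (2 * r - 1) → C, Rich r χ' ∧
    ∃ f : Fin (2 * r - 1) → Fin n, ∃ hf : StrictMono f,
      ∀ e : Edge (2 * r - 1), χ' e = χ (edgeMap f hf e)

/-- A set `S` of vertices is `χ`-homogeneous: all edges inside `S` have the same color. -/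
def Homog {n l : ℕ} (χ : Edge n → Fin l) (S : Finset (Fin n)) : Prop :=
  ∀ i ∈ S, ∀ j ∈ S, ∀ i' ∈ S, ∀ j' ∈ S, ∀ (h : i < j) (h' : i' < j'),
    χ ⟨(i, j), h⟩ = χ ⟨(i', j'), h'⟩


/-! ### Auxiliary lemmas -/

lemma revE_mkE {n i j : ℕ} (hij : i < j) (hj : j < n) :
    revE (mkE i j hij hj) = mkE (n-1-j) (n-1-i) (by omega) (by omega) := by
  apply Subtype.ext
  apply Prod.ext <;> apply Fin.ext <;>
    simp [revE, mkE, Fin.rev] <;> omega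

lemma edge_color {n m l : ℕ} (χ : Edge n → Fin l) (A : Finset (Fin n)) (a : Fin l)
    (hom : ∀ i ∈ A, ∀ j ∈ A, ∀ (h : i < j), χ ⟨(i,j), h⟩ = a)
    (f : Fin m → Fin n) (hf : StrictMono f) {i j : ℕ} (hij : i < j) (hj : j < m)
    (hi : f ⟨i, lt_trans hij hj⟩ ∈ A) (hjm : f ⟨j, hj⟩ ∈ A) :
    χ (edgeMap f hf (mkE i j hij hj)) = a :=
  hom _ hi _ hjm _

lemma edge_color_b {n m : ℕ} {C : Type} (χ : Edge n → C) (f : Fin m → Fin n) (hf : StrictMono f)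
    {i j : ℕ} (hij : i < j) (hj : j < m) {x y : Fin n} (hxy : x < y)
    (hx : f ⟨i, lt_trans hij hj⟩ = x) (hy : f ⟨j, hj⟩ = y) :
    χ (edgeMap f hf (mkE i j hij hj)) = χ ⟨(x,y), hxy⟩ := by
  congr 1
  exact Subtype.ext (Prod.ext hx hy)

lemma build {n m : ℕ} (S1 S2 S3 : Finset (Fin n)) (x y : Fin n)
    {s1 s2 s3 : ℕ} (h1 : S1.card = s1) (h2 : S2.card = s2) (h3 : S3.card = s3)
    (hm : m = s1 + s2 + s3 + 2)
    (h1x : ∀ a ∈ S1, a < x) (hx2 : ∀ a ∈ S2, x < a) (h2y : ∀ a ∈ S2, a < y)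
    (hxy : x < y) (hy3 : ∀ a ∈ S3, y < a) :
    ∃ f : Fin m → Fin n, StrictMono f ∧
      (∀ i : Fin m, i.val < s1 → f i ∈ S1) ∧
      (∀ i : Fin m, i.val = s1 → f i = x) ∧
      (∀ i : Fin m, s1 < i.val → i.val < s1 + 1 + s2 → f i ∈ S2) ∧
      (∀ i : Fin m, i.val = s1 + 1 + s2 → f i = y) ∧
      (∀ i : Fin m, s1 + 1 + s2 < i.val → f i ∈ S3) := by
  classical
  set f : Fin m → Fin n := fun i =>
    if hlt : i.val < s1 then S1.orderEmbOfFin h1 ⟨i, hlt⟩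
    else if heq : i.val = s1 then x
    else if hlt2 : i.val < s1 + 1 + s2 then S2.orderEmbOfFin h2 ⟨i.val - (s1+1), by omega⟩
    else if heq2 : i.val = s1 + 1 + s2 then y
    else S3.orderEmbOfFin h3 ⟨i.val - (s1 + s2 + 2), by have := i.isLt; omega⟩
    with hfdef
  have ev1 : ∀ (i : Fin m) (h : i.val < s1), f i = S1.orderEmbOfFin h1 ⟨i, h⟩ := by
    intro i h; simp only [hfdef, dif_pos h]
  have ev2 : ∀ (i : Fin m), i.val = s1 → f i = x := by
    intro i h; simp only [hfdef]; rw [dif_neg (by omega), dif_pos h]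
  have ev3 : ∀ (i : Fin m) (hl : s1 < i.val) (h : i.val < s1 + 1 + s2),
      f i = S2.orderEmbOfFin h2 ⟨i.val - (s1+1), by omega⟩ := by
    intro i hl h; simp only [hfdef]; rw [dif_neg (by omega), dif_neg (by omega), dif_pos h]
  have ev4 : ∀ (i : Fin m), i.val = s1 + 1 + s2 → f i = y := by
    intro i h; simp only [hfdef]
    rw [dif_neg (by omega), dif_neg (by omega), dif_neg (by omega), dif_pos h]
  have ev5 : ∀ (i : Fin m) (h : s1 + 1 + s2 < i.val),
      f i = S3.orderEmbOfFin h3 ⟨i.val - (s1 + s2 + 2), by have := i.isLt; omega⟩ := by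
    intro i h; simp only [hfdef]
    rw [dif_neg (by omega), dif_neg (by omega), dif_neg (by omega), dif_neg (by omega)]
  have lt_x : ∀ (i : Fin m), i.val < s1 → f i < x := by
    intro i h; rw [ev1 i h]; exact h1x _ (S1.orderEmbOfFin_mem h1 _)
  have x_lt : ∀ (i : Fin m), s1 < i.val → x < f i := by
    intro i h
    rcases lt_trichotomy i.val (s1 + 1 + s2) with h'|h'|h'
    · rw [ev3 i h h']; exact hx2 _ (S2.orderEmbOfFin_mem h2 _)
    · rw [ev4 i h']; exact hxy
    · rw [ev5 i h']; exact lt_trans hxy (hy3 _ (S3.orderEmbOfFin_mem h3 _))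
  have lt_y : ∀ (i : Fin m), i.val < s1 + 1 + s2 → f i < y := by
    intro i h
    rcases lt_trichotomy i.val s1 with h'|h'|h'
    · rw [ev1 i h']; exact lt_trans (h1x _ (S1.orderEmbOfFin_mem h1 _)) hxy
    · rw [ev2 i h']; exact hxy
    · rw [ev3 i h' h]; exact h2y _ (S2.orderEmbOfFin_mem h2 _)
  have y_lt : ∀ (i : Fin m), s1 + 1 + s2 < i.val → y < f i := by
    intro i h; rw [ev5 i h]; exact hy3 _ (S3.orderEmbOfFin_mem h3 _)
  have hmono : StrictMono f := by
    intro i j hij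
    have hij' : i.val < j.val := hij
    rcases lt_trichotomy j.val s1 with hj|hj|hj
    · rw [ev1 i (by omega), ev1 j hj]
      exact (S1.orderEmbOfFin h1).strictMono (Fin.mk_lt_mk.mpr (by omega))
    · rw [ev2 j hj]; exact lt_x i (by omega)
    · rcases lt_trichotomy j.val (s1 + 1 + s2) with hj2|hj2|hj2
      · rcases lt_trichotomy i.val s1 with hi|hi|hi
        · exact lt_trans (lt_x i hi) (x_lt j hj)
        · rw [ev2 i hi]; exact x_lt j hj
        · rw [ev3 i hi (by omega), ev3 j hj hj2]
          exact (S2.orderEmbOfFin h2).strictMono (Fin.mk_lt_mk.mpr (by omega))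
      · rw [ev4 j hj2]; exact lt_y i (by omega)
      · rcases lt_trichotomy i.val (s1 + 1 + s2) with hi|hi|hi
        · exact lt_trans (lt_y i hi) (y_lt j hj2)
        · rw [ev4 i hi]; exact y_lt j hj2
        · rw [ev5 i hi, ev5 j hj2]
          exact (S3.orderEmbOfFin h3).strictMono (Fin.mk_lt_mk.mpr (by omega))
  refine ⟨f, hmono, ?_, ev2, ?_, ev4, ?_⟩
  · intro i h; rw [ev1 i h]; exact S1.orderEmbOfFin_mem h1 _
  · intro i h h'; rw [ev3 i h h']; exact S2.orderEmbOfFin_mem h2 _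
  · intro i h; rw [ev5 i h]; exact S3.orderEmbOfFin_mem h3 _

/-- Let `r ≥ 2`, `(n,χ)` an `[l]`-colored complete graph, `A` a
`χ`-homogeneous set of maximum cardinality, and `A'` obtained from `A` by deleting its
first `2r-2` and last `2r-2` elements. If `A'` is nonempty and is not an interval of
consecutive elements of `[n]`, then `(n,χ)` contains an `r`-rich coloring. -/
theorem stmt_15 (l r n : ℕ) (hr : 2 ≤ r) (χ : Edge n → Fin l)
    (A : Finset (Fin n)) (hA : Homog χ A)
    (hmax : ∀ S : Finset (Fin n), Homog χ S → S.card ≤ A.card)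
    (A' : Finset (Fin n))
    (hA' : A' = A.filter (fun x =>
      2 * r - 2 ≤ (A.filter (fun y => y < x)).card ∧
      2 * r - 2 ≤ (A.filter (fun y => x < y)).card))
    (hne : A'.Nonempty)
    (hni : ¬ ∃ x y : Fin n, A' = Finset.Icc x y) :
    ContainsRich r χ := by
  classical
  set u := A'.min' hne with hu
  set v := A'.max' hne with hv
  have huA' : u ∈ A' := A'.min'_mem hne
  have hvA' : v ∈ A' := A'.max'_mem hne
  have hsub : A' ⊆ Finset.Icc u v := fun t ht =>
    Finset.mem_Icc.mpr ⟨A'.min'_le t ht, A'.le_max' t ht⟩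
  have hneq : A' ≠ Finset.Icc u v := fun h => hni ⟨u, v, h⟩
  obtain ⟨z, hzIcc, hzA'⟩ := Finset.exists_of_ssubset (hsub.ssubset_of_ne hneq)
  obtain ⟨huz', hzv'⟩ := Finset.mem_Icc.mp hzIcc
  have huz : u < z := lt_of_le_of_ne huz' (fun h => hzA' (h ▸ huA'))
  have hzv : z < v := lt_of_le_of_ne hzv' (fun h => hzA' (h ▸ hvA'))
  rw [hA'] at huA' hvA'
  obtain ⟨huA, hcu1, hcu2⟩ := Finset.mem_filter.mp huA'
  obtain ⟨hvA, hcv1, hcv2⟩ := Finset.mem_filter.mp hvA'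
  -- counts below and above z
  have hbz : 2*r - 1 ≤ (A.filter (fun y => y < z)).card := by
    have hsub2 : insert u (A.filter (fun y => y < u)) ⊆ A.filter (fun y => y < z) := by
      intro t ht
      rcases Finset.mem_insert.mp ht with rfl | ht
      · exact Finset.mem_filter.mpr ⟨huA, huz⟩
      · obtain ⟨h1, h2⟩ := Finset.mem_filter.mp ht
        exact Finset.mem_filter.mpr ⟨h1, lt_trans h2 huz⟩
    have h2 := Finset.card_le_card hsub2
    rw [Finset.card_insert_of_notMem (by simp)] at h2
    omega
  have haz : 2*r - 1 ≤ (A.filter (fun y => z < y)).card := by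
    have hsub2 : insert v (A.filter (fun y => v < y)) ⊆ A.filter (fun y => z < y) := by
      intro t ht
      rcases Finset.mem_insert.mp ht with rfl | ht
      · exact Finset.mem_filter.mpr ⟨hvA, hzv⟩
      · obtain ⟨h1, h2⟩ := Finset.mem_filter.mp ht
        exact Finset.mem_filter.mpr ⟨h1, lt_trans hzv h2⟩
    have h2 := Finset.card_le_card hsub2
    rw [Finset.card_insert_of_notMem (by simp)] at h2
    omega
  -- z is not in A
  have hzA : z ∉ A := by
    intro hz
    apply hzA'
    rw [hA']
    simp only [Finset.mem_filter]
    exact ⟨hz, by omega, by omega⟩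
  -- the color a
  have huvlt : u < v := lt_trans huz hzv
  set a := χ ⟨(u, v), huvlt⟩ with ha
  have hom : ∀ i ∈ A, ∀ j ∈ A, ∀ (h : i < j), χ ⟨(i,j), h⟩ = a :=
    fun i hi j hj h => hA i hi j hj u huA v hvA h huvlt
  -- find a witness w with an off-color edge to z
  have hw : ∃ w ∈ A, (∃ h : w < z, χ ⟨(w,z), h⟩ ≠ a) ∨ (∃ h : z < w, χ ⟨(z,w), h⟩ ≠ a) := by
    by_contra hcon
    push_neg at hcon
    have key : ∀ i ∈ insert z A, ∀ j ∈ insert z A, ∀ (h : i < j), χ ⟨(i,j), h⟩ = a := by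
      intro i hi j hj h
      rcases Finset.mem_insert.mp hi with hiz | hiA
      · rcases Finset.mem_insert.mp hj with hjz | hjA
        · subst hiz; subst hjz; exact absurd h (lt_irrefl _)
        · subst hiz; exact (hcon j hjA).2 h
      · rcases Finset.mem_insert.mp hj with hjz | hjA
        · subst hjz; exact (hcon i hiA).1 h
        · exact hom i hiA j hjA h
    have hhom : Homog χ (insert z A) := by
      intro i hi j hj i' hi' j' hj' h h'
      rw [key i hi j hj h, key i' hi' j' hj' h']
    have hle := hmax _ hhom
    rw [Finset.card_insert_of_notMem hzA] at hle
    omega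
  obtain ⟨w, hwA, hwcase⟩ := hw
  rcases hwcase with ⟨hwz, hbne⟩ | ⟨hzw, hbne⟩
  · -- CASE w < z
    set mid := A.filter (fun t => w < t ∧ t < z) with hmid_def
    set low := A.filter (fun t => t < w) with hlow_def
    have hcover : A.filter (fun y => y < z) ⊆ insert w (low ∪ mid) := by
      intro t ht
      obtain ⟨h1, h2⟩ := Finset.mem_filter.mp ht
      rcases lt_trichotomy t w with h3 | rfl | h3
      · exact Finset.mem_insert.mpr (Or.inr (Finset.mem_union_left _ (Finset.mem_filter.mpr ⟨h1, h3⟩)))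
      · exact Finset.mem_insert_self _ _
      · exact Finset.mem_insert.mpr (Or.inr (Finset.mem_union_right _ (Finset.mem_filter.mpr ⟨h1, h3, h2⟩)))
    have hcard : 2*r - 2 ≤ low.card + mid.card := by
      have h1 := Finset.card_le_card hcover
      have h2 := Finset.card_insert_le w (low ∪ mid)
      have h3 := Finset.card_union_le low mid
      omega
    by_cases hmid : r - 1 ≤ mid.card
    · -- Type 2
      obtain ⟨M, hMsub, hMcard⟩ := Finset.exists_subset_card_eq hmid
      obtain ⟨U, hUsub, hUcard⟩ := Finset.exists_subset_card_eq
        (show r - 2 ≤ (A.filter (fun y => z < y)).card by omega)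
      obtain ⟨f, hf, -, hev2, hmemM, hev4, -⟩ :=
        build (∅ : Finset (Fin n)) M U w z Finset.card_empty hMcard hUcard
          (show 2*r-1 = 0 + (r-1) + (r-2) + 2 by omega)
          (by simp)
          (fun t ht => ((Finset.mem_filter.mp (hMsub ht)).2).1)
          (fun t ht => ((Finset.mem_filter.mp (hMsub ht)).2).2)
          hwz
          (fun t ht => (Finset.mem_filter.mp (hUsub ht)).2)
      have hfA : ∀ (t : ℕ) (ht : t < 2*r-1), t ≤ r - 1 → f ⟨t, ht⟩ ∈ A := by
        intro t ht h
        rcases Nat.eq_zero_or_pos t with rfl | hpos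
        · rw [hev2 ⟨0, ht⟩ rfl]; exact hwA
        · exact (Finset.mem_filter.mp (hMsub (hmemM ⟨t, ht⟩ hpos (show t < 0+1+(r-1) by omega)))).1
      refine ⟨fun e => χ (edgeMap f hf e), Or.inr (Or.inr (Or.inl ?_)), f, hf, fun e => rfl⟩
      refine ⟨a, χ ⟨(w, z), hwz⟩, Ne.symm hbne, ?_, ?_⟩
      · intro t h1 h2
        exact edge_color χ A a hom f hf (by omega) (by omega)
          (hfA 0 _ (by omega)) (hfA t _ (by omega))
      · intro h
        exact edge_color_b χ f hf (by omega) h hwz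
          (hev2 ⟨0, by omega⟩ rfl) (hev4 ⟨r, h⟩ (show r = 0+1+(r-1) by omega))
    · -- Type 1
      have hlow : r - 1 ≤ low.card := by omega
      obtain ⟨L, hLsub, hLcard⟩ := Finset.exists_subset_card_eq hlow
      obtain ⟨U, hUsub, hUcard⟩ := Finset.exists_subset_card_eq
        (show r - 2 ≤ (A.filter (fun y => z < y)).card by omega)
      obtain ⟨f, hf, hmemL, hev2, -, hev4, -⟩ :=
        build L (∅ : Finset (Fin n)) U w z hLcard Finset.card_empty hUcard
          (show 2*r-1 = (r-1) + 0 + (r-2) + 2 by omega)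
          (fun t ht => (Finset.mem_filter.mp (hLsub ht)).2)
          (by simp) (by simp)
          hwz
          (fun t ht => (Finset.mem_filter.mp (hUsub ht)).2)
      have hfA : ∀ (t : ℕ) (ht : t < 2*r-1), t ≤ r - 1 → f ⟨t, ht⟩ ∈ A := by
        intro t ht h
        rcases lt_or_eq_of_le h with h' | heq
        · exact (Finset.mem_filter.mp (hLsub (hmemL ⟨t, ht⟩ h'))).1
        · rw [hev2 ⟨t, ht⟩ heq]; exact hwA
      refine ⟨fun e => χ (edgeMap f hf e), Or.inl ?_, f, hf, fun e => rfl⟩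
      refine ⟨a, χ ⟨(w, z), hwz⟩, Ne.symm hbne, ?_, ?_⟩
      · intro t h1
        exact edge_color χ A a hom f hf (by omega) (by omega)
          (hfA t _ (by omega)) (hfA (t+1) _ (by omega))
      · intro h
        exact edge_color_b χ f hf (by omega) h hwz
          (hev2 ⟨r-1, by omega⟩ rfl) (hev4 ⟨r, h⟩ (show r = (r-1)+1+0 by omega))
  · -- CASE z < w
    set mid := A.filter (fun t => z < t ∧ t < w) with hmid_def
    set up := A.filter (fun t => w < t) with hup_def
    have hcover : A.filter (fun y => z < y) ⊆ insert w (mid ∪ up) := by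
      intro t ht
      obtain ⟨h1, h2⟩ := Finset.mem_filter.mp ht
      rcases lt_trichotomy t w with h3 | rfl | h3
      · exact Finset.mem_insert.mpr (Or.inr (Finset.mem_union_left _ (Finset.mem_filter.mpr ⟨h1, h2, h3⟩)))
      · exact Finset.mem_insert_self _ _
      · exact Finset.mem_insert.mpr (Or.inr (Finset.mem_union_right _ (Finset.mem_filter.mpr ⟨h1, h3⟩)))
    have hcard : 2*r - 2 ≤ mid.card + up.card := by
      have h1 := Finset.card_le_card hcover
      have h2 := Finset.card_insert_le w (mid ∪ up)
      have h3 := Finset.card_union_le mid up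
      omega
    by_cases hmid : r - 1 ≤ mid.card
    · -- Type 2 reversed
      obtain ⟨M, hMsub, hMcard⟩ := Finset.exists_subset_card_eq hmid
      obtain ⟨B, hBsub, hBcard⟩ := Finset.exists_subset_card_eq
        (show r - 2 ≤ (A.filter (fun y => y < z)).card by omega)
      obtain ⟨f, hf, -, hev2, hmemM, hev4, -⟩ :=
        build B M (∅ : Finset (Fin n)) z w hBcard hMcard Finset.card_empty
          (show 2*r-1 = (r-2) + (r-1) + 0 + 2 by omega)
          (fun t ht => (Finset.mem_filter.mp (hBsub ht)).2)
          (fun t ht => ((Finset.mem_filter.mp (hMsub ht)).2).1)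
          (fun t ht => ((Finset.mem_filter.mp (hMsub ht)).2).2)
          hzw
          (by simp)
      have hfA : ∀ (t : ℕ) (ht : t < 2*r-1), r - 1 ≤ t → f ⟨t, ht⟩ ∈ A := by
        intro t ht h
        rcases lt_or_eq_of_le (show t ≤ 2*r-2 by omega) with h' | heq
        · exact (Finset.mem_filter.mp (hMsub (hmemM ⟨t, ht⟩ (show r-2 < t by omega) (show t < (r-2)+1+(r-1) by omega)))).1
        · rw [hev4 ⟨t, ht⟩ (show t = (r-2)+1+(r-1) by omega)]; exact hwA
      refine ⟨fun e => χ (edgeMap f hf e), Or.inr (Or.inr (Or.inr ?_)), f, hf, fun e => rfl⟩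
      refine ⟨a, χ ⟨(z, w), hzw⟩, Ne.symm hbne, ?_, ?_⟩
      · intro t h1 h2
        show (fun e => χ (edgeMap f hf e)) (revE (mkE 0 t (by omega) (by omega))) = a
        rw [revE_mkE]
        exact edge_color χ A a hom f hf (by omega) (by omega)
          (hfA (2*r-1-1-t) _ (by omega)) (hfA (2*r-1-1-0) _ (by omega))
      · intro h
        show (fun e => χ (edgeMap f hf e)) (revE (mkE 0 r (by omega) h)) = _
        rw [revE_mkE]
        exact edge_color_b χ f hf (by omega) (by omega) hzw
          (hev2 ⟨2*r-1-1-r, by omega⟩ (show 2*r-1-1-r = r-2 by omega))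
          (hev4 ⟨2*r-1-1-0, by omega⟩ (show 2*r-1-1-0 = (r-2)+1+(r-1) by omega))
    · -- Type 1 reversed
      have hupc : r - 1 ≤ up.card := by omega
      obtain ⟨U, hUsub, hUcard⟩ := Finset.exists_subset_card_eq hupc
      obtain ⟨B, hBsub, hBcard⟩ := Finset.exists_subset_card_eq
        (show r - 2 ≤ (A.filter (fun y => y < z)).card by omega)
      obtain ⟨f, hf, -, hev2, -, hev4, hmemU⟩ :=
        build B (∅ : Finset (Fin n)) U z w hBcard Finset.card_empty hUcard
          (show 2*r-1 = (r-2) + 0 + (r-1) + 2 by omega)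
          (fun t ht => (Finset.mem_filter.mp (hBsub ht)).2)
          (by simp) (by simp)
          hzw
          (fun t ht => (Finset.mem_filter.mp (hUsub ht)).2)
      have hfA : ∀ (t : ℕ) (ht : t < 2*r-1), r - 1 ≤ t → f ⟨t, ht⟩ ∈ A := by
        intro t ht h
        rcases lt_or_eq_of_le h with h' | heq
        · exact (Finset.mem_filter.mp (hUsub (hmemU ⟨t, ht⟩ (show (r-2)+1+0 < t by omega)))).1
        · rw [hev4 ⟨t, ht⟩ (show t = (r-2)+1+0 by omega)]; exact hwA
      refine ⟨fun e => χ (edgeMap f hf e), Or.inr (Or.inl ?_), f, hf, fun e => rfl⟩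
      refine ⟨a, χ ⟨(z, w), hzw⟩, Ne.symm hbne, ?_, ?_⟩
      · intro t h1
        show (fun e => χ (edgeMap f hf e)) (revE (mkE t (t+1) (by omega) (by omega))) = a
        rw [revE_mkE]
        exact edge_color χ A a hom f hf (by omega) (by omega)
          (hfA (2*r-1-1-(t+1)) _ (by omega)) (hfA (2*r-1-1-t) _ (by omega))
      · intro h
        show (fun e => χ (edgeMap f hf e)) (revE (mkE (r-1) r (by omega) h)) = _
        rw [revE_mkE]
        exact edge_color_b χ f hf (by omega) (by omega) hzw
          (hev2 ⟨2*r-1-1-r, by omega⟩ (show 2*r-1-1-r = r-2 by omega))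
          (hev4 ⟨2*r-1-1-(r-1), by omega⟩ (show 2*r-1-1-(r-1) = (r-2)+1+0 by omega))
end
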